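/- A linear map f : 𝔥₄ → 𝔥₄ is an automorphism of 𝔥₄ if and only if its matrix in the basis e₁,…,e₆ has the block form with rows of blocks ((A, 0, 0), (B, xσ(A), 0), (M₁, M₂, Δ)), where A ∈ GL₂(ℝ), B, M₁, M₂ are arbitrary real 2×2 matrices, x ∈ ℝ with x ≠ 0, σ((a,b),(c,d)) = ((a,-b),(-c,d)), and Δ is the 2×2 matrix ((det A, 0), ((A,B), x·det A)) with (A,B) = a₁₁b₂₂ - a₁₂b₂₁ + a₂₁b₁₂ - a₂₂b₁₁ (writing A = (a_{ij}) and B = (b_{ij})). -/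
import Mathlib


open Matrix

/-- The Lie bracket of the nilpotent Lie algebra 𝔥₄ = (0,0,0,0,12,14+23) in the basis
e₁,…,e₆: the only nonzero brackets among basis vectors are [e₁,e₂] = -e₅ and
[e₁,e₄] = [e₂,e₃] = -e₆. -/
def h4bracket (x y : Fin 6 → ℝ) : Fin 6 → ℝ :=
  ![0, 0, 0, 0, -(x 0 * y 1 - x 1 * y 0),
    -((x 0 * y 3 - x 3 * y 0) + (x 1 * y 2 - x 2 * y 1))]

/-- An automorphism of 𝔥₄, identified with its matrix in the basis e₁,…,e₆. -/
def IsAutH4 (f : Matrix (Fin 6) (Fin 6) ℝ) : Prop :=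
  IsUnit f ∧ ∀ x y : Fin 6 → ℝ, f.mulVec (h4bracket x y) = h4bracket (f.mulVec x) (f.mulVec y)

section AuxCv
variable {α : Type*}
@[simp] lemma cv6_1 (x:α)(u:Fin 5→α) : vecCons x u 1 = u 0 := rfl
@[simp] lemma cv6_2 (x:α)(u:Fin 5→α) : vecCons x u 2 = u 1 := rfl
@[simp] lemma cv6_3 (x:α)(u:Fin 5→α) : vecCons x u 3 = u 2 := rfl
@[simp] lemma cv6_4 (x:α)(u:Fin 5→α) : vecCons x u 4 = u 3 := rfl
@[simp] lemma cv6_5 (x:α)(u:Fin 5→α) : vecCons x u 5 = u 4 := rfl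
@[simp] lemma cv5_1 (x:α)(u:Fin 4→α) : vecCons x u 1 = u 0 := rfl
@[simp] lemma cv5_2 (x:α)(u:Fin 4→α) : vecCons x u 2 = u 1 := rfl
@[simp] lemma cv5_3 (x:α)(u:Fin 4→α) : vecCons x u 3 = u 2 := rfl
@[simp] lemma cv5_4 (x:α)(u:Fin 4→α) : vecCons x u 4 = u 3 := rfl
@[simp] lemma cv4_1 (x:α)(u:Fin 3→α) : vecCons x u 1 = u 0 := rfl
@[simp] lemma cv4_2 (x:α)(u:Fin 3→α) : vecCons x u 2 = u 1 := rfl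
@[simp] lemma cv4_3 (x:α)(u:Fin 3→α) : vecCons x u 3 = u 2 := rfl
@[simp] lemma cv3_1 (x:α)(u:Fin 2→α) : vecCons x u 1 = u 0 := rfl
@[simp] lemma cv3_2 (x:α)(u:Fin 2→α) : vecCons x u 2 = u 1 := rfl
@[simp] lemma cv2_1 (x:α)(u:Fin 1→α) : vecCons x u 1 = u 0 := rfl
end AuxCv

@[simp] lemma fmk0 (h : 0 < 6) : (⟨0, h⟩ : Fin 6) = 0 := rfl
@[simp] lemma fmk1 (h : 1 < 6) : (⟨1, h⟩ : Fin 6) = 1 := rfl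
@[simp] lemma fmk2 (h : 2 < 6) : (⟨2, h⟩ : Fin 6) = 2 := rfl
@[simp] lemma fmk3 (h : 3 < 6) : (⟨3, h⟩ : Fin 6) = 3 := rfl
@[simp] lemma fmk4 (h : 4 < 6) : (⟨4, h⟩ : Fin 6) = 4 := rfl
@[simp] lemma fmk5 (h : 5 < 6) : (⟨5, h⟩ : Fin 6) = 5 := rfl

@[simp] lemma fsAux1 : (Fin.succ 2 : Fin 4) = 3 := rfl
@[simp] lemma fsAux2 : Fin.succAbove (2 : Fin 4) (2 : Fin 3) = 3 := rfl
@[simp] lemma fsAux3 : Fin.succAbove (1 : Fin 4) (2 : Fin 3) = 3 := rfl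
@[simp] lemma fsAux4 : Fin.castSucc (2 : Fin 3) = (2 : Fin 4) := rfl
@[simp] lemma fsAux5 : Fin.succAbove (3 : Fin 4) (2 : Fin 3) = 2 := rfl

lemma det6_block (p : Matrix (Fin 4) (Fin 4) ℝ) (c : Matrix (Fin 2) (Fin 4) ℝ)
    (q : Matrix (Fin 2) (Fin 2) ℝ) :
    (!![p 0 0, p 0 1, p 0 2, p 0 3, 0, 0;
        p 1 0, p 1 1, p 1 2, p 1 3, 0, 0;
        p 2 0, p 2 1, p 2 2, p 2 3, 0, 0;
        p 3 0, p 3 1, p 3 2, p 3 3, 0, 0;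
        c 0 0, c 0 1, c 0 2, c 0 3, q 0 0, q 0 1;
        c 1 0, c 1 1, c 1 2, c 1 3, q 1 0, q 1 1] : Matrix (Fin 6) (Fin 6) ℝ).det
      = p.det * q.det := by
  have h : (!![p 0 0, p 0 1, p 0 2, p 0 3, 0, 0;
        p 1 0, p 1 1, p 1 2, p 1 3, 0, 0;
        p 2 0, p 2 1, p 2 2, p 2 3, 0, 0;
        p 3 0, p 3 1, p 3 2, p 3 3, 0, 0;
        c 0 0, c 0 1, c 0 2, c 0 3, q 0 0, q 0 1;
        c 1 0, c 1 1, c 1 2, c 1 3, q 1 0, q 1 1] : Matrix (Fin 6) (Fin 6) ℝ)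
      = (fromBlocks p 0 c q).submatrix finSumFinEquiv.symm finSumFinEquiv.symm := by
    ext i j
    fin_cases i <;> fin_cases j <;> rfl
  rw [h, Matrix.det_submatrix_equiv_self, Matrix.det_fromBlocks_zero₁₂]

lemma det4_block (p c q : Matrix (Fin 2) (Fin 2) ℝ) :
    (!![p 0 0, p 0 1, 0, 0;
        p 1 0, p 1 1, 0, 0;
        c 0 0, c 0 1, q 0 0, q 0 1;
        c 1 0, c 1 1, q 1 0, q 1 1] : Matrix (Fin 4) (Fin 4) ℝ).det
      = p.det * q.det := by
  have h : (!![p 0 0, p 0 1, 0, 0;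
        p 1 0, p 1 1, 0, 0;
        c 0 0, c 0 1, q 0 0, q 0 1;
        c 1 0, c 1 1, q 1 0, q 1 1] : Matrix (Fin 4) (Fin 4) ℝ)
      = (fromBlocks p 0 c q).submatrix finSumFinEquiv.symm finSumFinEquiv.symm := by
    ext i j
    fin_cases i <;> fin_cases j <;> rfl
  rw [h, Matrix.det_submatrix_equiv_self, Matrix.det_fromBlocks_zero₁₂]

set_option maxHeartbeats 1000000 in
lemma det_fin_four' (M : Matrix (Fin 4) (Fin 4) ℝ) :
    M.det = M 0 0 * (M 1 1 * (M 2 2 * M 3 3 - M 2 3 * M 3 2)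
                   - M 1 2 * (M 2 1 * M 3 3 - M 2 3 * M 3 1)
                   + M 1 3 * (M 2 1 * M 3 2 - M 2 2 * M 3 1))
           - M 0 1 * (M 1 0 * (M 2 2 * M 3 3 - M 2 3 * M 3 2)
                   - M 1 2 * (M 2 0 * M 3 3 - M 2 3 * M 3 0)
                   + M 1 3 * (M 2 0 * M 3 2 - M 2 2 * M 3 0))
           + M 0 2 * (M 1 0 * (M 2 1 * M 3 3 - M 2 3 * M 3 1)
                   - M 1 1 * (M 2 0 * M 3 3 - M 2 3 * M 3 0)
                   + M 1 3 * (M 2 0 * M 3 1 - M 2 1 * M 3 0))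
           - M 0 3 * (M 1 0 * (M 2 1 * M 3 2 - M 2 2 * M 3 1)
                   - M 1 1 * (M 2 0 * M 3 2 - M 2 2 * M 3 0)
                   + M 1 2 * (M 2 0 * M 3 1 - M 2 1 * M 3 0)) := by
  simp [Matrix.det_succ_row_zero, Fin.sum_univ_succ]
  ring

set_option maxHeartbeats 4000000 in
set_option maxRecDepth 40000 in
/-- Theorem 6.4: a linear map f is an automorphism of 𝔥₄ if and only if, in the basis
e₁,…,e₆, it has the block form ((A,0,0), (B, xσ(A), 0), (M₁, M₂, Δ)) where
A = ((a,b),(c,d)) ∈ GL₂(ℝ), B, M₁, M₂ ∈ ℝ^{2×2}, x ≠ 0, σ((a,b),(c,d)) = ((a,-b),(-c,d))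
and Δ = ((det A, 0), ((A,B), x det A)) with (A,B) = a·B₂₂ - b·B₂₁ + c·B₁₂ - d·B₁₁. -/
theorem aut_h4_iff_block_form (f : Matrix (Fin 6) (Fin 6) ℝ) :
    IsAutH4 f ↔
      ∃ (a b c d x : ℝ) (B M₁ M₂ : Matrix (Fin 2) (Fin 2) ℝ),
        a * d - b * c ≠ 0 ∧ x ≠ 0 ∧
        f = !![a, b, 0, 0, 0, 0;
               c, d, 0, 0, 0, 0;
               B 0 0, B 0 1, x * a, -(x * b), 0, 0;
               B 1 0, B 1 1, -(x * c), x * d, 0, 0;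
               M₁ 0 0, M₁ 0 1, M₂ 0 0, M₂ 0 1, a * d - b * c, 0;
               M₁ 1 0, M₁ 1 1, M₂ 1 0, M₂ 1 1,
                 a * B 1 1 - b * B 1 0 + c * B 0 1 - d * B 0 0,
                 x * (a * d - b * c)] := by
  constructor
  · rintro ⟨hu, hb⟩
    have h01 := hb ![1,0,0,0,0,0] ![0,1,0,0,0,0]
    have h02 := hb ![1,0,0,0,0,0] ![0,0,1,0,0,0]
    have h03 := hb ![1,0,0,0,0,0] ![0,0,0,1,0,0]
    have h12 := hb ![0,1,0,0,0,0] ![0,0,1,0,0,0]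
    have h13 := hb ![0,1,0,0,0,0] ![0,0,0,1,0,0]
    have h23 := hb ![0,0,1,0,0,0] ![0,0,0,1,0,0]
    have z04 := congrFun h01 0
    have z14 := congrFun h01 1
    have z24 := congrFun h01 2
    have z34 := congrFun h01 3
    have e44 := congrFun h01 4
    have e54 := congrFun h01 5
    have z05 := congrFun h03 0
    have z15 := congrFun h03 1
    have z25 := congrFun h03 2
    have z35 := congrFun h03 3
    have e03_4 := congrFun h03 4
    have e03_5 := congrFun h03 5
    have e12_4 := congrFun h12 4
    have e12_5 := congrFun h12 5
    have e02_4 := congrFun h02 4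
    have e02_5 := congrFun h02 5
    have e13_4 := congrFun h13 4
    have e13_5 := congrFun h13 5
    have e23_4 := congrFun h23 4
    simp only [h4bracket, Matrix.mulVec, dotProduct, Fin.sum_univ_six,
      Matrix.cons_val_zero, Matrix.cons_val_one, Matrix.head_cons,
      cv6_1, cv6_2, cv6_3, cv6_4, cv6_5, cv5_1, cv5_2, cv5_3, cv5_4,
      cv4_1, cv4_2, cv4_3, cv3_1, cv3_2, cv2_1,
      mul_zero, mul_one, zero_mul, one_mul, add_zero, zero_add, zero_sub, sub_zero,
      mul_neg, neg_zero, neg_eq_zero, neg_neg, neg_inj]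
      at z04 z14 z24 z34 e44 e54 z05 z15 z25 z35 e03_4 e03_5 e12_4 e12_5 e02_4 e02_5
         e13_4 e13_5 e23_4
    -- determinant nonzero
    have hdetne : f.det ≠ 0 :=
      isUnit_iff_ne_zero.mp ((Matrix.isUnit_iff_isUnit_det f).mp hu)
    have hf : f = !![f 0 0, f 0 1, f 0 2, f 0 3, 0, 0;
                     f 1 0, f 1 1, f 1 2, f 1 3, 0, 0;
                     f 2 0, f 2 1, f 2 2, f 2 3, 0, 0;
                     f 3 0, f 3 1, f 3 2, f 3 3, 0, 0;
                     f 4 0, f 4 1, f 4 2, f 4 3, f 4 4, f 4 5;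
                     f 5 0, f 5 1, f 5 2, f 5 3, f 5 4, f 5 5] := by
      ext i j
      fin_cases i <;> fin_cases j <;>
        simp only [Matrix.cons_val', Matrix.cons_val_zero, Matrix.cons_val_one, Matrix.head_cons,
          Matrix.empty_val', Matrix.cons_val_fin_one, Matrix.head_fin_const, Matrix.of_apply,
          cv6_1, cv6_2, cv6_3, cv6_4, cv6_5, cv5_1, cv5_2, cv5_3, cv5_4, cv4_1, cv4_2, cv4_3,
          cv3_1, cv3_2, cv2_1] <;>
        first | rfl | assumption
    have h6 := det6_block
      !![f 0 0, f 0 1, f 0 2, f 0 3; f 1 0, f 1 1, f 1 2, f 1 3;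
         f 2 0, f 2 1, f 2 2, f 2 3; f 3 0, f 3 1, f 3 2, f 3 3]
      !![f 4 0, f 4 1, f 4 2, f 4 3; f 5 0, f 5 1, f 5 2, f 5 3]
      !![f 4 4, f 4 5; f 5 4, f 5 5]
    simp only [Matrix.cons_val', Matrix.cons_val_zero, Matrix.cons_val_one, Matrix.head_cons,
      Matrix.empty_val', Matrix.cons_val_fin_one, Matrix.head_fin_const, Matrix.of_apply,
      cv6_1, cv6_2, cv6_3, cv6_4, cv6_5, cv5_1, cv5_2, cv5_3, cv5_4, cv4_1, cv4_2, cv4_3,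
      cv3_1, cv3_2, cv2_1] at h6
    rw [hf, h6] at hdetne
    have hP := left_ne_zero_of_mul hdetne
    have hQ := right_ne_zero_of_mul hdetne
    -- key algebraic consequences
    have k1 : (f 0 0 * f 1 1 - f 1 0 * f 0 1) * f 0 2 = -(f 0 0 * f 4 5) := by
      linear_combination f 0 1 * e02_4 + f 0 0 * e12_4
    have k2 : (f 0 0 * f 1 1 - f 1 0 * f 0 1) * f 1 2 = -(f 1 0 * f 4 5) := by
      linear_combination f 1 1 * e02_4 + f 1 0 * e12_4
    have k3 : (f 0 0 * f 1 1 - f 1 0 * f 0 1) * f 0 3 = f 0 1 * f 4 5 := by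
      linear_combination (-(f 0 0)) * e13_4 - f 0 1 * e03_4
    have k4 : (f 0 0 * f 1 1 - f 1 0 * f 0 1) * f 1 3 = f 1 1 * f 4 5 := by
      linear_combination (-(f 1 0)) * e13_4 - f 1 1 * e03_4
    have hD : f 0 0 * f 1 1 - f 1 0 * f 0 1 ≠ 0 := by
      intro hD0
      have hae : f 0 0 * f 4 5 = 0 := by linear_combination k1 - f 0 2 * hD0
      have hbe : f 0 1 * f 4 5 = 0 := by linear_combination -k3 + f 0 3 * hD0
      have hce : f 1 0 * f 4 5 = 0 := by linear_combination k2 - f 1 2 * hD0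
      have hde : f 1 1 * f 4 5 = 0 := by linear_combination -k4 + f 1 3 * hD0
      have hene : f 4 5 ≠ 0 := by
        intro h0
        apply hQ
        rw [Matrix.det_fin_two_of]
        linear_combination f 5 5 * e44 + f 5 5 * hD0 - f 5 4 * h0
      have ha0 : f 0 0 = 0 := (mul_eq_zero.mp hae).resolve_right hene
      have hb0 : f 0 1 = 0 := (mul_eq_zero.mp hbe).resolve_right hene
      have hc0 : f 1 0 = 0 := (mul_eq_zero.mp hce).resolve_right hene
      have hd0 : f 1 1 = 0 := (mul_eq_zero.mp hde).resolve_right hene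
      apply hP
      rw [det_fin_four']
      simp only [Matrix.cons_val', Matrix.cons_val_zero, Matrix.cons_val_one, Matrix.head_cons,
        Matrix.empty_val', Matrix.cons_val_fin_one, Matrix.head_fin_const, Matrix.of_apply,
        cv6_1, cv6_2, cv6_3, cv6_4, cv6_5, cv5_1, cv5_2, cv5_3, cv5_4, cv4_1, cv4_2, cv4_3,
        cv3_1, cv3_2, cv2_1]
      rw [ha0, hb0, hc0, hd0]
      linear_combination (f 2 0 * f 3 1 - f 2 1 * f 3 0) * e23_4
    have he2 : f 4 5 * f 4 5 * (f 0 0 * f 1 1 - f 1 0 * f 0 1) = 0 := by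
      linear_combination
        (-((f 0 0 * f 1 1 - f 1 0 * f 0 1) * (f 0 0 * f 1 1 - f 1 0 * f 0 1))) * e23_4
        + ((f 0 0 * f 1 1 - f 1 0 * f 0 1) * f 1 3) * k1
        - (f 0 0 * f 4 5) * k4
        - ((f 0 0 * f 1 1 - f 1 0 * f 0 1) * f 0 3) * k2
        + (f 1 0 * f 4 5) * k3
    have he0 : f 4 5 = 0 := mul_self_eq_zero.mp ((mul_eq_zero.mp he2).resolve_right hD)
    rw [he0] at k1 k2 k3 k4
    have z02 : f 0 2 = 0 :=
      (mul_eq_zero.mp (by linear_combination k1)).resolve_left hD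
    have z12 : f 1 2 = 0 :=
      (mul_eq_zero.mp (by linear_combination k2)).resolve_left hD
    have z03 : f 0 3 = 0 :=
      (mul_eq_zero.mp (by linear_combination k3)).resolve_left hD
    have z13 : f 1 3 = 0 :=
      (mul_eq_zero.mp (by linear_combination k4)).resolve_left hD
    have hf55 : f 5 5 ≠ 0 := by
      intro h0
      apply hQ
      rw [Matrix.det_fin_two_of]
      linear_combination f 4 4 * h0 - f 5 4 * he0
    rw [z02, z12] at e02_5 e12_5
    rw [z03, z13] at e03_5 e13_5
    have m22 : (f 0 0 * f 1 1 - f 1 0 * f 0 1) * f 2 2 = f 0 0 * f 5 5 := by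
      linear_combination (-(f 0 1)) * e02_5 - f 0 0 * e12_5
    have m32 : (f 0 0 * f 1 1 - f 1 0 * f 0 1) * f 3 2 = -(f 1 0 * f 5 5) := by
      linear_combination f 1 1 * e02_5 + f 1 0 * e12_5
    have m23 : (f 0 0 * f 1 1 - f 1 0 * f 0 1) * f 2 3 = -(f 0 1 * f 5 5) := by
      linear_combination f 0 0 * e13_5 + f 0 1 * e03_5
    have m33 : (f 0 0 * f 1 1 - f 1 0 * f 0 1) * f 3 3 = f 1 1 * f 5 5 := by
      linear_combination (-(f 1 0)) * e13_5 - f 1 1 * e03_5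
    refine ⟨f 0 0, f 0 1, f 1 0, f 1 1, f 5 5 / (f 0 0 * f 1 1 - f 1 0 * f 0 1),
      !![f 2 0, f 2 1; f 3 0, f 3 1], !![f 4 0, f 4 1; f 5 0, f 5 1],
      !![f 4 2, f 4 3; f 5 2, f 5 3],
      fun h => hD (by linear_combination h), div_ne_zero hf55 hD, ?_⟩
    ext i j
    fin_cases i <;> fin_cases j <;>
      simp only [Matrix.cons_val', Matrix.cons_val_zero, Matrix.cons_val_one, Matrix.head_cons,
        Matrix.empty_val', Matrix.cons_val_fin_one, Matrix.head_fin_const, Matrix.of_apply,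
        cv6_1, cv6_2, cv6_3, cv6_4, cv6_5, cv5_1, cv5_2, cv5_3, cv5_4, cv4_1, cv4_2, cv4_3,
        cv3_1, cv3_2, cv2_1, fmk0, fmk1, fmk2, fmk3, fmk4, fmk5] <;>
      first
      | rfl
      | assumption
      | linear_combination e44
      | linear_combination e54
      | (field_simp; all_goals first | (left; ring) | linear_combination m22 | linear_combination m23 | linear_combination m32 | linear_combination m33 | ring)
  · rintro ⟨a, b, c, d, x, B, M₁, M₂, hD, hx, rfl⟩
    constructor
    · rw [Matrix.isUnit_iff_isUnit_det, isUnit_iff_ne_zero]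
      have h6 := det6_block
        !![a, b, 0, 0; c, d, 0, 0; B 0 0, B 0 1, x * a, -(x * b); B 1 0, B 1 1, -(x * c), x * d]
        !![M₁ 0 0, M₁ 0 1, M₂ 0 0, M₂ 0 1; M₁ 1 0, M₁ 1 1, M₂ 1 0, M₂ 1 1]
        !![a * d - b * c, 0; a * B 1 1 - b * B 1 0 + c * B 0 1 - d * B 0 0, x * (a * d - b * c)]
      have h4 := det4_block !![a, b; c, d] !![B 0 0, B 0 1; B 1 0, B 1 1]
        !![x * a, -(x * b); -(x * c), x * d]
      simp only [Matrix.cons_val', Matrix.cons_val_zero, Matrix.cons_val_one, Matrix.head_cons,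
        Matrix.empty_val', Matrix.cons_val_fin_one, Matrix.head_fin_const, Matrix.of_apply,
        cv6_2, cv6_3, cv5_2, cv5_3, cv4_2, cv4_3, cv3_2] at h6 h4
      rw [h6, h4, Matrix.det_fin_two_of, Matrix.det_fin_two_of, Matrix.det_fin_two_of]
      have key : x ^ 3 * (a * d - b * c) ^ 4 ≠ 0 :=
        mul_ne_zero (pow_ne_zero 3 hx) (pow_ne_zero 4 hD)
      intro h0
      exact key (by linear_combination h0)
    · intro u v
      funext k
      fin_cases k <;>
        simp [h4bracket, Matrix.mulVec, dotProduct, Fin.sum_univ_six] <;> ring
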